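/- Let m ≥ 3 and let A ≥ 0, B be integers with 12A + 6B - B² ≥ 0 and such that 12A + 6B - B² ≠ 4^l(8k+7) for all nonnegative integers l, k. Then there exist integers x₁, x₂, x₃, x₄ with P_m(x₁) + P_m(x₂) + 2P_m(x₃) + 2P_m(x₄) = A(m-2) + B. -/

import Mathlib

/-!
With `B = x₁ + x₂ + 2x₃ + 2x₄`, `a = -x₁ + x₂ - 2x₃ + 2x₄`, `b = 2(x₂ - x₄)` and `c = 2(x₃ - x₁)`
one has `a² + b² + c² + B² = 6(x₁² + x₂² + 2x₃² + 2x₄²)`. Since `2 P_m(x) = (m-2)x² - (m-4)x`,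
it suffices to write `12A + 6B - B² = a² + b² + c²` with `a ≡ B`, `b ≡ c ≡ 0 (mod 2)` and
`b ≡ a + B`, `c ≡ a - B (mod 3)`, the congruences that make the `xᵢ` integral. Legendre's
three-square theorem gives some representation, and a permutation and sign changes of `a, b, c`
achieve the congruences.

For the three-square theorem: a positive definite integral ternary form of determinant 1 takes only
sums of three squares as values (Gauss reduction brings its first coefficient down to 1; splitting
off that square leaves a binary form of determinant 1, which is `x² + y²`). If `n ≡ 1, 2 (mod 4)`
or `n ≡ 3 (mod 8)`, Dirichlet's theorem and quadratic reciprocity give `δ > 0`, `e`, and `q = p` or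
`q = 2p` with `p` prime, such that `nδ - q = 1` and `q ∣ e² + δ`; the form with Gram matrix
`!![(e² + δ) / q, -e, 1; -e, q, 0; 1, 0, n]` is then positive definite of determinant 1 and takes
the value `n`.
-/

/-- The generalized `m`-gonal number `P_m(x) = ((m-2)x² - (m-4)x)/2`. -/
def polygonal (m x : ℤ) : ℤ := ((m - 2) * x ^ 2 - (m - 4) * x) / 2

def binForm (a b c x y : ℤ) : ℤ := a * x ^ 2 + 2 * b * x * y + c * y ^ 2

section BinaryForm

variable {a b c : ℤ}

theorem binForm_swap (a b c x y : ℤ) : binForm a b c x y = binForm c b a y x := by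
  unfold binForm; ring

theorem binForm_shear (a b c t x y : ℤ) :
    binForm a b c (x + t * y) y = binForm a (a * t + b) (binForm a b c t 1) x y := by
  unfold binForm; ring

theorem binForm_mul_binForm (a b c x y x' y' : ℤ) :
    binForm a b c x y * binForm a b c x' y' =
      (a * x * x' + b * (x * y' + y * x') + c * y * y') ^ 2 +
        (a * c - b ^ 2) * (x * y' - y * x') ^ 2 := by
  unfold binForm; ring

theorem binForm_pos (ha : 0 < a) (hD : 0 < a * c - b ^ 2) {x y : ℤ} (hxy : x ≠ 0 ∨ y ≠ 0) :
    0 < binForm a b c x y := by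
  have key : a * binForm a b c x y = (a * x + b * y) ^ 2 + (a * c - b ^ 2) * y ^ 2 := by
    unfold binForm; ring
  refine pos_of_mul_pos_right (key ▸ ?_) ha.le
  rcases eq_or_ne y 0 with rfl | hy
  · have hx : x ≠ 0 := by simpa using hxy
    simpa using sq_pos_of_ne_zero (mul_ne_zero ha.ne' hx)
  · positivity

theorem exists_abs_mul_add_le (d : ℤ) (ha : 0 < a) : ∃ t, 2 * |a * t + d| ≤ a := by
  have h₀ := Int.emod_nonneg d ha.ne'
  have h₁ := Int.emod_lt_of_pos d ha
  have hd := Int.emod_add_mul_ediv d a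
  rcases le_or_gt (2 * (d % a)) a with h | h
  · refine ⟨-(d / a), ?_⟩
    rw [show a * -(d / a) + d = d % a by linarith, abs_of_nonneg h₀]
    exact h
  · refine ⟨-(d / a) - 1, ?_⟩
    rw [show a * (-(d / a) - 1) + d = d % a - a by linarith, abs_of_neg (by linarith)]
    linarith

theorem three_mul_sq_le_of_reduced (hb : 2 * |b| ≤ a) (hac : a ≤ c) :
    3 * a ^ 2 ≤ 4 * (a * c - b ^ 2) := by
  have ha : 0 ≤ a := by linarith [abs_nonneg b]
  nlinarith [sq_abs b, abs_nonneg b, mul_le_mul_of_nonneg_left hac ha]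

theorem exists_unimodular_binForm_sq_le (ha : 0 < a) (hD : 0 < a * c - b ^ 2) :
    ∃ x y u v, x * v - y * u = 1 ∧ 3 * binForm a b c x y ^ 2 ≤ 4 * (a * c - b ^ 2) := by
  induction hN : b.natAbs using Nat.strong_induction_on generalizing a b c with
  | _ N ih =>
  have hc : 0 < c := by nlinarith [sq_nonneg b]
  wlog hac : a ≤ c generalizing a c
  · obtain ⟨x, y, u, v, huni, hle⟩ := this hc (by rwa [mul_comm]) ha (by omega)
    exact ⟨y, x, -v, -u, by linear_combination huni, by rwa [binForm_swap, mul_comm a]⟩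
  rcases le_or_gt (2 * |b|) a with hb | hb
  · exact ⟨1, 0, 0, 1, by ring, by simpa [binForm] using three_mul_sq_le_of_reduced hb hac⟩
  obtain ⟨t, ht⟩ := exists_abs_mul_add_le b ha
  have hdet : a * binForm a b c t 1 - (a * t + b) ^ 2 = a * c - b ^ 2 := by unfold binForm; ring
  have hlt : (a * t + b).natAbs < N := by
    rw [← hN, ← Int.ofNat_lt, Int.natCast_natAbs, Int.natCast_natAbs]; linarith
  obtain ⟨x, y, u, v, huni, hle⟩ := ih _ hlt ha (hdet ▸ hD) rfl
  exact ⟨x + t * y, y, u + t * v, v, by linear_combination huni, by rwa [binForm_shear, ← hdet]⟩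

theorem exists_binForm_eq_sq_add_sq (ha : 0 < a) (hD : a * c - b ^ 2 = 1) (x y : ℤ) :
    ∃ s t, binForm a b c x y = s ^ 2 + t ^ 2 := by
  obtain ⟨x₀, y₀, u₀, v₀, huni, hle⟩ := exists_unimodular_binForm_sq_le ha (hD ▸ one_pos)
  have hpos : 0 < binForm a b c x₀ y₀ := binForm_pos ha (hD ▸ one_pos) (by
    by_contra! h; simp [h.1, h.2] at huni)
  have hone : binForm a b c x₀ y₀ = 1 := by rw [hD] at hle; nlinarith
  refine ⟨a * x₀ * x + b * (x₀ * y + y₀ * x) + c * y₀ * y, x₀ * y - y₀ * x, ?_⟩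
  have key := binForm_mul_binForm a b c x₀ y₀ x y
  rw [hone, hD] at key
  linarith

end BinaryForm

open Matrix

theorem transpose_mul_mul_dotProduct_mulVec {n R : Type*} [Fintype n] [CommSemiring R]
    (M T : Matrix n n R) (v : n → R) : v ⬝ᵥ (Tᵀ * M * T) *ᵥ v = (T *ᵥ v) ⬝ᵥ M *ᵥ (T *ᵥ v) := by
  simp only [← mulVec_mulVec, dotProduct_mulVec, vecMul_transpose]

section TernaryForm

variable {M : Matrix (Fin 3) (Fin 3) ℤ}

theorem Matrix.IsHermitian.apply_fin_three (hM : M.IsHermitian) :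
    M 1 0 = M 0 1 ∧ M 2 0 = M 0 2 ∧ M 2 1 = M 1 2 :=
  ⟨by simpa using hM.apply 0 1, by simpa using hM.apply 0 2, by simpa using hM.apply 1 2⟩

theorem dotProduct_mulVec_fin_three (hM : M.IsHermitian) (v : Fin 3 → ℤ) :
    v ⬝ᵥ M *ᵥ v = M 0 0 * v 0 ^ 2 + M 1 1 * v 1 ^ 2 + M 2 2 * v 2 ^ 2
      + 2 * (M 0 1 * v 0 * v 1 + M 0 2 * v 0 * v 2 + M 1 2 * v 1 * v 2) := by
  obtain ⟨h₁, h₂, h₃⟩ := hM.apply_fin_three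
  simp only [dotProduct, mulVec, Fin.sum_univ_three, h₁, h₂, h₃]
  ring

theorem det_fin_three_of_isHermitian (hM : M.IsHermitian) :
    M.det = M 0 0 * M 1 1 * M 2 2 + 2 * M 0 1 * M 0 2 * M 1 2
      - M 0 0 * M 1 2 ^ 2 - M 1 1 * M 0 2 ^ 2 - M 2 2 * M 0 1 ^ 2 := by
  obtain ⟨h₁, h₂, h₃⟩ := hM.apply_fin_three
  rw [det_fin_three, h₁, h₂, h₃]
  ring

theorem mul_dotProduct_mulVec_fin_three (hM : M.IsHermitian) (v : Fin 3 → ℤ) :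
    M 0 0 * (v ⬝ᵥ M *ᵥ v) = (M 0 0 * v 0 + M 0 1 * v 1 + M 0 2 * v 2) ^ 2 +
      binForm (M 0 0 * M 1 1 - M 0 1 ^ 2) (M 0 0 * M 1 2 - M 0 1 * M 0 2)
        (M 0 0 * M 2 2 - M 0 2 ^ 2) (v 1) (v 2) := by
  rw [dotProduct_mulVec_fin_three hM, binForm]
  ring

theorem minor_mul_minor_sub_sq_eq_mul_det (hM : M.IsHermitian) :
    (M 0 0 * M 1 1 - M 0 1 ^ 2) * (M 0 0 * M 2 2 - M 0 2 ^ 2) - (M 0 0 * M 1 2 - M 0 1 * M 0 2) ^ 2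
      = M 0 0 * M.det := by
  rw [det_fin_three_of_isHermitian hM]
  ring

theorem posDef_of_minors_fin_three (hM : M.IsHermitian) (h₁ : 0 < M 0 0)
    (h₂ : 0 < M 0 0 * M 1 1 - M 0 1 ^ 2) (h₃ : 0 < M.det) : M.PosDef := by
  refine PosDef.of_dotProduct_mulVec_pos hM fun v hv ↦ ?_
  rw [star_trivial]
  refine pos_of_mul_pos_right ?_ h₁.le
  rw [mul_dotProduct_mulVec_fin_three hM]
  by_cases hv₁₂ : v 1 = 0 ∧ v 2 = 0
  · have hv₀ : v 0 ≠ 0 := fun h ↦ hv (by ext i; fin_cases i <;> simp [h, hv₁₂])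
    simp only [hv₁₂, binForm]
    simpa using sq_pos_of_ne_zero (mul_ne_zero h₁.ne' hv₀)
  · have := binForm_pos h₂ (by rw [minor_mul_minor_sub_sq_eq_mul_det hM]; positivity)
      (not_and_or.mp hv₁₂)
    positivity

theorem Matrix.PosDef.minor_pos (hM : M.PosDef) : 0 < M 0 0 * M 1 1 - M 0 1 ^ 2 := by
  have h := hM.dotProduct_mulVec_pos (x := ![-M 0 1, M 0 0, 0]) (by simp [hM.diag_pos.ne'])
  rw [star_trivial, dotProduct_mulVec_fin_three hM.isHermitian] at h
  refine pos_of_mul_pos_right (a := M 0 0) ?_ hM.diag_pos.le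
  simp only [cons_val_zero, cons_val_one, cons_val] at h
  linarith

theorem Matrix.PosDef.exists_sum_three_sq_of_apply_zero_zero_eq_one (hM : M.PosDef)
    (hdet : M.det = 1) (ha : M 0 0 = 1) (v : Fin 3 → ℤ) :
    ∃ r s t, v ⬝ᵥ M *ᵥ v = r ^ 2 + s ^ 2 + t ^ 2 := by
  have hG := minor_mul_minor_sub_sq_eq_mul_det hM.isHermitian
  have hmin := hM.minor_pos
  simp only [ha, hdet, one_mul] at hG hmin
  obtain ⟨s, t, hst⟩ := exists_binForm_eq_sq_add_sq hmin hG (v 1) (v 2)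
  refine ⟨v 0 + M 0 1 * v 1 + M 0 2 * v 2, s, t, ?_⟩
  have key := mul_dotProduct_mulVec_fin_three hM.isHermitian v
  simp only [ha, one_mul] at key
  rw [key, hst]
  ring

theorem Matrix.PosDef.exists_dotProduct_mulVec_lt (hM : M.PosDef) (hdet : M.det = 1)
    (ha : 2 ≤ M 0 0) :
    ∃ x Y Z P V : ℤ, Y * V - Z * P = 1 ∧ ![x, Y, Z] ⬝ᵥ M *ᵥ ![x, Y, Z] < M 0 0 := by
  have hG := minor_mul_minor_sub_sq_eq_mul_det hM.isHermitian
  rw [hdet, mul_one] at hG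
  have hGpos := lt_of_lt_of_eq (by linarith : (0 : ℤ) < M 0 0) hG.symm
  obtain ⟨Y, Z, P, V, huni, hle⟩ := exists_unimodular_binForm_sq_le hM.minor_pos hGpos
  have hg := binForm_pos hM.minor_pos hGpos (x := Y) (y := Z) (by
    by_contra! h; simp [h.1, h.2] at huni)
  obtain ⟨x, hx⟩ := exists_abs_mul_add_le (M 0 1 * Y + M 0 2 * Z) (by linarith : 0 < M 0 0)
  refine ⟨x, Y, Z, P, V, huni, ?_⟩
  have key := mul_dotProduct_mulVec_fin_three hM.isHermitian ![x, Y, Z]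
  simp only [cons_val_zero, cons_val_one, cons_val_two, head_cons, tail_cons] at key
  rw [hG] at hle
  set g := binForm _ _ _ Y Z
  set r := M 0 0 * x + M 0 1 * Y + M 0 2 * Z
  have hr : 4 * r ^ 2 ≤ M 0 0 ^ 2 := by
    have : 2 * |r| ≤ M 0 0 := by simpa [r, add_assoc] using hx
    nlinarith [sq_abs r, abs_nonneg r]
  have hg' : 4 * g < 3 * M 0 0 ^ 2 := by nlinarith
  nlinarith

theorem Matrix.PosDef.exists_sum_three_sq (hM : M.PosDef) (hdet : M.det = 1) (v : Fin 3 → ℤ) :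
    ∃ r s t, v ⬝ᵥ M *ᵥ v = r ^ 2 + s ^ 2 + t ^ 2 := by
  induction hN : (M 0 0).toNat using Nat.strong_induction_on generalizing M v with
  | _ N ih =>
  have ha := hM.diag_pos (i := 0)
  rcases eq_or_lt_of_le (show 1 ≤ M 0 0 by omega) with ha₁ | ha₂
  · exact hM.exists_sum_three_sq_of_apply_zero_zero_eq_one hdet ha₁.symm v
  obtain ⟨x, Y, Z, P, V, huni, hlt⟩ := hM.exists_dotProduct_mulVec_lt hdet ha₂
  set T : Matrix (Fin 3) (Fin 3) ℤ := !![x, -1, 0; Y, 0, P; Z, 0, V]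
  have hT : T.det = 1 := by
    simp only [T, det_fin_three, of_apply, cons_val', cons_val_zero, cons_val_one, cons_val,
      cons_val_fin_one]
    linear_combination huni
  have hTu : IsUnit T.det := hT ▸ isUnit_one
  have hM' : (Tᴴ * M * T).PosDef :=
    hM.conjTranspose_mul_mul_same (mulVec_injective_of_isUnit ((isUnit_iff_isUnit_det T).mpr hTu))
  rw [conjTranspose_eq_transpose_of_trivial] at hM'
  have hdet' : (Tᵀ * M * T).det = 1 := by simp [hT, hdet]
  have h00 : (Tᵀ * M * T) 0 0 = ![x, Y, Z] ⬝ᵥ M *ᵥ ![x, Y, Z] := by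
    simp only [T, mul_apply, transpose_apply, dotProduct, mulVec, Fin.sum_univ_three, of_apply,
      cons_val', cons_val_zero, cons_val_one, cons_val, cons_val_fin_one]
    ring
  obtain ⟨r, s, t, h⟩ := ih _ (by omega) hM' hdet' (T⁻¹ *ᵥ v) rfl
  refine ⟨r, s, t, ?_⟩
  rwa [transpose_mul_mul_dotProduct_mulVec, mulVec_mulVec, mul_nonsing_inv _ hTu,
    one_mulVec] at h

end TernaryForm

theorem exists_sum_three_sq_of_dvd {n q e δ : ℤ} (hq : 0 < q) (hδ : 0 < δ) (hdvd : q ∣ e ^ 2 + δ)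
    (hn : n * δ - q = 1) : ∃ r s t, n = r ^ 2 + s ^ 2 + t ^ 2 := by
  obtain ⟨d, hd⟩ := hdvd
  have hd₀ : 0 < d := pos_of_mul_pos_right (hd ▸ by positivity) hq.le
  set M : Matrix (Fin 3) (Fin 3) ℤ := !![d, -e, 1; -e, q, 0; 1, 0, n]
  have hdet : M.det = 1 := by
    simp only [M, det_fin_three, of_apply, cons_val', cons_val_zero, cons_val_one, cons_val,
      cons_val_fin_one]
    linear_combination -n * hd + hn
  have hM : M.PosDef := by
    refine posDef_of_minors_fin_three (IsHermitian.ext fun i j ↦ ?_) hd₀ ?_ (hdet ▸ one_pos)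
    · fin_cases i <;> fin_cases j <;> simp [M]
    · simp only [M, of_apply, cons_val', cons_val_zero, cons_val_one, cons_val_fin_one]
      linarith
  obtain ⟨r, s, t, h⟩ := hM.exists_sum_three_sq hdet ![0, 0, 1]
  exact ⟨r, s, t, by simpa [M, dotProduct, mulVec, Fin.sum_univ_three] using h⟩

theorem exists_sq_add_dvd_of_jacobiSym_eq_one {p : ℕ} [Fact p.Prime] {δ : ℤ}
    (h : jacobiSym (-δ) p = 1) : ∃ b : ℤ, (p : ℤ) ∣ b ^ 2 + δ := by
  obtain ⟨u, hu⟩ := ZMod.isSquare_of_jacobiSym_eq_one h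
  refine ⟨u.val, (ZMod.intCast_zmod_eq_zero_iff_dvd _ p).mp ?_⟩
  push_cast at hu ⊢
  rw [ZMod.natCast_zmod_val]
  linear_combination -hu

theorem jacobiSym_neg_eq_one {p δ : ℕ} (hp : p % 4 = 1) (hδ : δ % 4 = 1) {c : ℤ}
    (hc : jacobiSym c δ = 1) (h : c * p ≡ -1 [ZMOD δ]) : jacobiSym (-δ) p = 1 := by
  have hpodd : Odd p := Nat.odd_iff.mpr (by omega)
  have hδodd : Odd δ := Nat.odd_iff.mpr (by omega)
  calc jacobiSym (-δ) p = jacobiSym (-1) p * jacobiSym δ p := by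
        rw [← jacobiSym.mul_left, neg_one_mul]
    _ = jacobiSym c δ * jacobiSym p δ := by
        rw [jacobiSym.at_neg_one hpodd, ZMod.χ₄_nat_one_mod_four hp, hc,
          jacobiSym.quadratic_reciprocity_one_mod_four hδ hpodd]
    _ = jacobiSym (-1) δ := by rw [← jacobiSym.mul_left, jacobiSym.mod_left' h]
    _ = 1 := by rw [jacobiSym.at_neg_one hδodd, ZMod.χ₄_nat_one_mod_four hδ]

theorem exists_prime_eq_mul_add {M : ℕ} {r : ℤ} (hM : M ≠ 0) (h : IsCoprime r M) :
    ∃ p t : ℕ, p.Prime ∧ (p : ℤ) = M * t + r := by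
  obtain ⟨p, hpr, hp, hmod⟩ := Nat.forall_exists_prime_gt_and_zmodEq r.toNat hM h
  obtain ⟨t, ht⟩ := hmod.symm.dvd
  have ht₀ : 0 ≤ t := by
    by_contra! ht₀
    have : (M : ℤ) * t < 0 := mul_neg_of_pos_of_neg (by omega) ht₀
    omega
  lift t to ℕ using ht₀
  exact ⟨p, t, hp, by linarith⟩

theorem jacobiSym_two_eq_one {b : ℕ} (hb : b % 8 = 1) : jacobiSym 2 b = 1 := by
  rw [jacobiSym.at_two (Nat.odd_iff.mpr (by omega)), ZMod.χ₈_nat_mod_eight, hb]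
  rfl

theorem exists_sq_add_dvd_two_mul {p δ b : ℤ} (hp : Odd p) (hδ : Odd δ) (h : p ∣ b ^ 2 + δ) :
    ∃ b' : ℤ, 2 * p ∣ b' ^ 2 + δ := by
  obtain ⟨b', hb'odd, hb'⟩ : ∃ b', Odd b' ∧ p ∣ b' ^ 2 + δ := by
    rcases Int.even_or_odd b with hb | hb
    · exact ⟨b + p, hb.add_odd hp, by
        rw [show (b + p) ^ 2 + δ = b ^ 2 + δ + p * (2 * b + p) by ring]
        exact dvd_add h (dvd_mul_right p _)⟩
    · exact ⟨b, hb, h⟩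
  obtain ⟨k, rfl⟩ := hp
  have h2 : (2 : ℤ) ∣ b' ^ 2 + δ := (hb'odd.pow.add_odd hδ).two_dvd
  exact ⟨b', IsCoprime.mul_dvd ⟨-k, 1, by ring⟩ h2 hb'⟩

theorem exists_sum_three_sq_of_mod_four_eq_two {n : ℕ} (hn : n % 4 = 2) :
    ∃ r s t : ℤ, (n : ℤ) = r ^ 2 + s ^ 2 + t ^ 2 := by
  obtain ⟨k, rfl⟩ : ∃ k, n = 4 * k + 2 := ⟨n / 4, by omega⟩
  obtain ⟨p, t, hp, hpt⟩ := exists_prime_eq_mul_add (M := 4 * (4 * k + 2)) (r := 4 * k + 1)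
    (by omega) (by push_cast; exact IsCoprime.mul_right ⟨1, -k, by ring⟩ ⟨-1, 1, by ring⟩)
  have := Fact.mk hp
  push_cast at hpt
  have hp4 : p % 4 = 1 := by
    have : (p : ℤ) = 4 * ((4 * k + 2) * t + k) + 1 := by linear_combination hpt
    omega
  have hδ : ((4 * k + 2 : ℕ) : ℤ) * ((4 * t + 1 : ℕ) : ℤ) - p = 1 := by
    push_cast; linear_combination -hpt
  obtain ⟨b, hb⟩ := exists_sq_add_dvd_of_jacobiSym_eq_one <|
    jacobiSym_neg_eq_one (p := p) (δ := 4 * t + 1) hp4 (by omega) (jacobiSym.one_left _)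
      (Int.modEq_iff_dvd.mpr ⟨-(4 * k + 2), by push_cast at hδ ⊢; linear_combination hδ⟩)
  exact exists_sum_three_sq_of_dvd (by exact_mod_cast hp.pos) (by positivity) hb hδ

theorem exists_sum_three_sq_of_mod_four_eq_one {n : ℕ} (hn : n % 4 = 1) :
    ∃ r s t : ℤ, (n : ℤ) = r ^ 2 + s ^ 2 + t ^ 2 := by
  obtain ⟨k, rfl⟩ : ∃ k, n = 4 * k + 1 := ⟨n / 4, by omega⟩
  obtain ⟨p, t, hp, hpt⟩ := exists_prime_eq_mul_add (M := 8 * (4 * k + 1)) (r := 8 * k + 1)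
    (by omega) (by push_cast; exact IsCoprime.mul_right ⟨1, -k, by ring⟩ ⟨-1, 2, by ring⟩)
  have := Fact.mk hp
  push_cast at hpt
  have hp8 : p % 8 = 1 := by
    have : (p : ℤ) = 8 * ((4 * k + 1) * t + k) + 1 := by linear_combination hpt
    omega
  have hδ : ((4 * k + 1 : ℕ) : ℤ) * ((2 * (4 * t + 1) : ℕ) : ℤ) - p = 1 := by
    push_cast; linear_combination -hpt
  have hJ : jacobiSym (-((2 * (4 * t + 1) : ℕ) : ℤ)) p = 1 := by
    rw [show -((2 * (4 * t + 1) : ℕ) : ℤ) = 2 * -((4 * t + 1 : ℕ) : ℤ) by push_cast; ring,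
      jacobiSym.mul_left, jacobiSym_two_eq_one hp8, one_mul]
    exact jacobiSym_neg_eq_one (by omega) (by omega) (jacobiSym.one_left _)
      (Int.modEq_iff_dvd.mpr ⟨-2 * (4 * k + 1), by push_cast at hδ ⊢; linear_combination hδ⟩)
  obtain ⟨b, hb⟩ := exists_sq_add_dvd_of_jacobiSym_eq_one hJ
  exact exists_sum_three_sq_of_dvd (by exact_mod_cast hp.pos) (by positivity) hb hδ

theorem exists_sum_three_sq_of_mod_eight_eq_three {n : ℕ} (hn : n % 8 = 3) :
    ∃ r s t : ℤ, (n : ℤ) = r ^ 2 + s ^ 2 + t ^ 2 := by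
  obtain ⟨k, rfl⟩ : ∃ k, n = 8 * k + 3 := ⟨n / 8, by omega⟩
  obtain ⟨p, t, hp, hpt⟩ := exists_prime_eq_mul_add (M := 4 * (8 * k + 3)) (r := 4 * k + 1)
    (by omega) (by push_cast; exact IsCoprime.mul_right ⟨1, -k, by ring⟩ ⟨-2, 1, by ring⟩)
  have := Fact.mk hp
  push_cast at hpt
  have hp4 : (p : ℤ) = 4 * ((8 * k + 3) * t + k) + 1 := by linear_combination hpt
  have hδ : ((8 * k + 3 : ℕ) : ℤ) * ((8 * t + 1 : ℕ) : ℤ) - 2 * p = 1 := by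
    push_cast; linear_combination -2 * hpt
  obtain ⟨b, hb⟩ := exists_sq_add_dvd_of_jacobiSym_eq_one <|
    jacobiSym_neg_eq_one (p := p) (δ := 8 * t + 1) (by omega) (by omega)
      (jacobiSym_two_eq_one (by omega))
      (Int.modEq_iff_dvd.mpr ⟨-(8 * k + 3), by push_cast at hδ ⊢; linear_combination hδ⟩)
  obtain ⟨b', hb'⟩ := exists_sq_add_dvd_two_mul ⟨2 * ((8 * k + 3) * t + k), by linarith⟩
    ⟨4 * t, by push_cast; ring⟩ hb
  exact exists_sum_three_sq_of_dvd (by linarith [hp.two_le]) (by positivity) hb' hδ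

theorem exists_sum_three_sq {n : ℤ} (hn : 0 ≤ n) (h : ∀ l k : ℕ, n ≠ 4 ^ l * (8 * k + 7)) :
    ∃ r s t, n = r ^ 2 + s ^ 2 + t ^ 2 := by
  lift n to ℕ using hn
  induction n using Nat.strong_induction_on with
  | _ n ih =>
  rcases Nat.eq_zero_or_pos n with rfl | hn₀
  · exact ⟨0, 0, 0, by simp⟩
  by_cases h4 : n % 4 = 0
  · obtain ⟨m, rfl⟩ : ∃ m, n = 4 * m := ⟨n / 4, by omega⟩
    obtain ⟨r, s, t, hm⟩ := ih m (by omega) fun l k hk ↦ h (l + 1) k (by push_cast [hk]; ring)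
    exact ⟨2 * r, 2 * s, 2 * t, by push_cast [hm]; ring⟩
  have h8 : n % 8 ≠ 7 := fun h7 ↦ h 0 (n / 8) (by push_cast; omega)
  rcases (by omega : n % 4 = 1 ∨ n % 4 = 2 ∨ n % 8 = 3) with h1 | h2 | h3
  · exact exists_sum_three_sq_of_mod_four_eq_one h1
  · exact exists_sum_three_sq_of_mod_four_eq_two h2
  · exact exists_sum_three_sq_of_mod_eight_eq_three h3

theorem zmod_four_sq_add_sq_add_sq_eq : ∀ x y z w : ZMod 4, x ^ 2 + y ^ 2 + z ^ 2 = 2 * w - w ^ 2 →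
    (2 * (x - w) = 0 ∧ 2 * y = 0 ∧ 2 * z = 0) ∨ (2 * (y - w) = 0 ∧ 2 * x = 0 ∧ 2 * z = 0) ∨
      (2 * (z - w) = 0 ∧ 2 * x = 0 ∧ 2 * y = 0) := by
  decide

theorem zmod_three_sq_add_sq_add_sq_eq : ∀ x y z w : ZMod 3, x ^ 2 + y ^ 2 + z ^ 2 = 2 * w ^ 2 →
    (y ^ 2 = (x + w) ^ 2 ∧ z ^ 2 = (x - w) ^ 2) ∨
      (y ^ 2 = (-x + w) ^ 2 ∧ z ^ 2 = (-x - w) ^ 2) := by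
  decide

theorem exists_eq_or_eq_neg_dvd_sub {R : Type*} [CommRing R] {p y u : R} (hp : Prime p)
    (h : p ∣ y ^ 2 - u ^ 2) :
    ∃ y', (y' = y ∨ y' = -y) ∧ p ∣ y' - u := by
  rw [sq_sub_sq] at h
  rcases hp.dvd_or_dvd h with h | h
  · exact ⟨-y, Or.inr rfl, by rw [show -y - u = -(y + u) by ring]; exact h.neg_right⟩
  · exact ⟨y, Or.inl rfl, h⟩

section Congruences

variable {A B a b c : ℤ}

theorem exists_sum_three_sq_mod_two (h : a ^ 2 + b ^ 2 + c ^ 2 = 12 * A + 6 * B - B ^ 2) :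
    ∃ a b c : ℤ, a ^ 2 + b ^ 2 + c ^ 2 = 12 * A + 6 * B - B ^ 2 ∧ 2 ∣ a - B ∧ 2 ∣ b ∧ 2 ∣ c := by
  have h4 : (a : ZMod 4) ^ 2 + (b : ZMod 4) ^ 2 + (c : ZMod 4) ^ 2 = 2 * B - B ^ 2 := by
    have := congrArg (Int.cast : ℤ → ZMod 4) h
    push_cast at this
    have h40 : (4 : ZMod 4) = 0 := rfl
    linear_combination this + (3 * (A : ZMod 4) + B) * h40
  have two_dvd (u : ℤ) (hu : 2 * (u : ZMod 4) = 0) : 2 ∣ u := by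
    have : (4 : ℤ) ∣ 2 * u := (ZMod.intCast_zmod_eq_zero_iff_dvd _ 4).mp (by push_cast; exact hu)
    omega
  rcases zmod_four_sq_add_sq_add_sq_eq _ _ _ _ h4 with ⟨h₁, h₂, h₃⟩ | ⟨h₁, h₂, h₃⟩ | ⟨h₁, h₂, h₃⟩
  · exact ⟨a, b, c, h, two_dvd _ (by push_cast; exact h₁), two_dvd b h₂, two_dvd c h₃⟩
  · exact ⟨b, a, c, by linarith, two_dvd _ (by push_cast; exact h₁), two_dvd a h₂, two_dvd c h₃⟩
  · exact ⟨c, a, b, by linarith, two_dvd _ (by push_cast; exact h₁), two_dvd a h₂, two_dvd b h₃⟩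

theorem exists_sum_three_sq_mod_three (h : a ^ 2 + b ^ 2 + c ^ 2 = 12 * A + 6 * B - B ^ 2) :
    ∃ a', (a' = a ∨ a' = -a) ∧ (3 : ℤ) ∣ b ^ 2 - (a' + B) ^ 2 ∧ (3 : ℤ) ∣ c ^ 2 - (a' - B) ^ 2 := by
  have h3 : (a : ZMod 3) ^ 2 + (b : ZMod 3) ^ 2 + (c : ZMod 3) ^ 2 = 2 * B ^ 2 := by
    have := congrArg (Int.cast : ℤ → ZMod 3) h
    push_cast at this
    have h30 : (3 : ZMod 3) = 0 := rfl
    linear_combination this + (4 * (A : ZMod 3) + 2 * B - B ^ 2) * h30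
  have three_dvd (u v : ℤ) (huv : (u : ZMod 3) ^ 2 = (v : ZMod 3) ^ 2) : (3 : ℤ) ∣ u ^ 2 - v ^ 2 :=
    (ZMod.intCast_zmod_eq_zero_iff_dvd _ 3).mp (by push_cast; rw [huv, sub_self])
  rcases zmod_three_sq_add_sq_add_sq_eq _ _ _ _ h3 with ⟨hb, hc⟩ | ⟨hb, hc⟩
  · exact ⟨a, Or.inl rfl, three_dvd _ _ (by push_cast; exact hb),
      three_dvd _ _ (by push_cast; exact hc)⟩
  · exact ⟨-a, Or.inr rfl, three_dvd _ _ (by push_cast; exact hb),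
      three_dvd _ _ (by push_cast; exact hc)⟩

theorem exists_sum_three_sq_mod_six (h : a ^ 2 + b ^ 2 + c ^ 2 = 12 * A + 6 * B - B ^ 2) :
    ∃ a b c : ℤ, a ^ 2 + b ^ 2 + c ^ 2 = 12 * A + 6 * B - B ^ 2 ∧ 2 ∣ a - B ∧ 2 ∣ b ∧ 2 ∣ c ∧
      3 ∣ b - (a + B) ∧ 3 ∣ c - (a - B) := by
  obtain ⟨a, b, c, h, h₂a, h₂b, h₂c⟩ := exists_sum_three_sq_mod_two h
  obtain ⟨a', ha', hb, hc⟩ := exists_sum_three_sq_mod_three h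
  obtain ⟨b', hb', hb⟩ := exists_eq_or_eq_neg_dvd_sub Int.prime_three hb
  obtain ⟨c', hc', hc⟩ := exists_eq_or_eq_neg_dvd_sub Int.prime_three hc
  refine ⟨a', b', c', ?_, ?_, ?_, ?_, hb, hc⟩
  · rcases ha' with rfl | rfl <;> rcases hb' with rfl | rfl <;> rcases hc' with rfl | rfl <;>
      linear_combination h
  all_goals omega

end Congruences

theorem two_mul_polygonal (m x : ℤ) : 2 * polygonal m x = (m - 2) * x ^ 2 - (m - 4) * x := by
  obtain ⟨u, hu⟩ := Int.even_mul_succ_self (x - 1)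
  exact Int.mul_ediv_cancel' ⟨(m - 2) * u + x, by linear_combination (m - 2) * hu⟩

theorem polygonal_add_add_two_mul_add_two_mul_eq (m A B x₁ x₂ x₃ x₄ : ℤ)
    (hlin : x₁ + x₂ + 2 * x₃ + 2 * x₄ = B)
    (hsq : x₁ ^ 2 + x₂ ^ 2 + 2 * x₃ ^ 2 + 2 * x₄ ^ 2 = 2 * A + B) :
    polygonal m x₁ + polygonal m x₂ + 2 * polygonal m x₃ + 2 * polygonal m x₄ =
      A * (m - 2) + B := by
  have h : 2 * (polygonal m x₁ + polygonal m x₂ + 2 * polygonal m x₃ + 2 * polygonal m x₄) =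
      2 * (A * (m - 2) + B) := by
    linear_combination two_mul_polygonal m x₁ + two_mul_polygonal m x₂ +
      2 * two_mul_polygonal m x₃ + 2 * two_mul_polygonal m x₄ + (m - 2) * hsq - (m - 4) * hlin
  linarith

theorem sq_add_sq_add_sq_add_sq_eq_six_mul (x₁ x₂ x₃ x₄ : ℤ) :
    (-x₁ + x₂ - 2 * x₃ + 2 * x₄) ^ 2 + (2 * (x₂ - x₄)) ^ 2 + (2 * (x₃ - x₁)) ^ 2 +
      (x₁ + x₂ + 2 * x₃ + 2 * x₄) ^ 2 = 6 * (x₁ ^ 2 + x₂ ^ 2 + 2 * x₃ ^ 2 + 2 * x₄ ^ 2) := by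
  ring

theorem rep_1122_general (m : ℤ) (A B : ℤ)
    (hd : 0 ≤ 12 * A + 6 * B - B ^ 2)
    (hform : ∀ l k : ℕ, 12 * A + 6 * B - B ^ 2 ≠ (4 : ℤ) ^ l * (8 * (k : ℤ) + 7)) :
    ∃ x₁ x₂ x₃ x₄ : ℤ,
      polygonal m x₁ + polygonal m x₂ + 2 * polygonal m x₃ + 2 * polygonal m x₄ =
        A * (m - 2) + B := by
  obtain ⟨a, b, c, hsum⟩ := exists_sum_three_sq hd hform
  obtain ⟨a, b, c, hsum, h₂a, h₂b, h₂c, h₃b, h₃c⟩ := exists_sum_three_sq_mod_six hsum.symm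
  obtain ⟨x₁, hx₁⟩ : (6 : ℤ) ∣ B - a - 2 * c := by omega
  obtain ⟨x₂, hx₂⟩ : (6 : ℤ) ∣ B + a + 2 * b := by omega
  obtain ⟨x₃, hx₃⟩ : (6 : ℤ) ∣ B - a + c := by omega
  obtain ⟨x₄, hx₄⟩ : (6 : ℤ) ∣ B + a - b := by omega
  have hB : x₁ + x₂ + 2 * x₃ + 2 * x₄ = B := by linarith
  have ha : -x₁ + x₂ - 2 * x₃ + 2 * x₄ = a := by linarith
  have hb : 2 * (x₂ - x₄) = b := by linarith
  have hc : 2 * (x₃ - x₁) = c := by linarith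
  have hsq := sq_add_sq_add_sq_add_sq_eq_six_mul x₁ x₂ x₃ x₄
  rw [ha, hb, hc, hB, hsum] at hsq
  exact ⟨x₁, x₂, x₃, x₄, polygonal_add_add_two_mul_add_two_mul_eq m A B _ _ _ _ hB (by linarith)⟩

theorem rep_1122 (m : ℤ) (hm : 3 ≤ m) (A B : ℤ) (hA : 0 ≤ A)
    (hd : 0 ≤ 12 * A + 6 * B - B ^ 2)
    (hform : ∀ l k : ℕ, 12 * A + 6 * B - B ^ 2 ≠ (4 : ℤ) ^ l * (8 * (k : ℤ) + 7)) :
    ∃ x₁ x₂ x₃ x₄ : ℤ,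
      polygonal m x₁ + polygonal m x₂ + 2 * polygonal m x₃ + 2 * polygonal m x₄ =
        A * (m - 2) + B :=
  rep_1122_general m A B hd hform
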